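/- arXiv:2311.01672 — 2 statements merged into one kernel-verified Lean document; each statement's English description precedes it below -/
import Mathlib

section
/- Let H be a finite graph admitting a cover projection onto the complete graph K4 on four vertices. Then H contains no bridge, i.e. no edge of H is a bridge. -/
/-- Let `H` be a finite graph admitting a cover projection onto the
complete graph `K₄` on four vertices (an onto map `π` sending the neighbourhood of
each vertex `v` bijectively onto the neighbourhood of `π v`). Then no edge of `H`
is a bridge. -/
theorem cover_of_K4_bridgeless {V : Type*} [Fintype V]
    (H : SimpleGraph V) (π : V → Fin 4)
    (hsurj : Function.Surjective π)
    (hcov : ∀ v : V, Set.BijOn π (H.neighborSet v)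
      ((SimpleGraph.completeGraph (Fin 4)).neighborSet (π v))) :
    ∀ e ∈ H.edgeSet, ¬ H.IsBridge e := by
  classical
  intro e he hbr
  induction e with
  | h u v =>
    rw [SimpleGraph.isBridge_iff] at hbr
    obtain ⟨hadj, hnr⟩ : H.Adj u v ∧ _ := ⟨he, hbr⟩
    -- unique neighbor of given colour
    have key : ∀ x : V, ∀ j : Fin 4, ∃ y, j ≠ π x →
        H.Adj x y ∧ π y = j ∧ ∀ z, H.Adj x z → π z = j → z = y := by
      intro x j
      by_cases hj : j ≠ π x
      · have hjmem : j ∈ (SimpleGraph.completeGraph (Fin 4)).neighborSet (π x) := by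
          simp [SimpleGraph.completeGraph, hj]
        obtain ⟨y, hy, hyj⟩ := (hcov x).surjOn hjmem
        exact ⟨y, fun _ => ⟨hy, hyj,
          fun z hz hzj => (hcov x).injOn hz hy (hzj.trans hyj.symm)⟩⟩
      · exact ⟨x, fun h => absurd h hj⟩
    choose nbr hnbr using key
    have hnadj : ∀ x j, j ≠ π x → H.Adj x (nbr x j) := fun x j hj => (hnbr x j hj).1
    have hnπ : ∀ x j, j ≠ π x → π (nbr x j) = j := fun x j hj => (hnbr x j hj).2.1
    have huniq : ∀ x j, j ≠ π x → ∀ z, H.Adj x z → π z = j → z = nbr x j :=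
      fun x j hj => (hnbr x j hj).2.2
    -- injectivity on fibers
    have hinj : ∀ x y (j : Fin 4), j ≠ π x → π x = π y → nbr x j = nbr y j → x = y := by
      intro x y j hj hπxy heq
      have hjy : j ≠ π y := hπxy ▸ hj
      have hm : π x ≠ π (nbr x j) := by rw [hnπ x j hj]; exact hj.symm
      have hx' : x = nbr (nbr x j) (π x) :=
        huniq (nbr x j) (π x) hm x (hnadj x j hj).symm rfl
      have hay : H.Adj (nbr x j) y := by rw [heq]; exact (hnadj y j hjy).symm
      have hy' : y = nbr (nbr x j) (π x) :=
        huniq (nbr x j) (π x) hm y hay hπxy.symm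
      rw [hx', hy']
    -- the component of u after deleting the edge
    set G' := H \ SimpleGraph.fromEdgeSet {s(u, v)} with hG'
    set C : Set V := {x | G'.Reachable u x} with hC
    have huC : u ∈ C := SimpleGraph.Reachable.refl u
    have hvC : v ∉ C := hnr
    have hstep : ∀ x y, x ∈ C → H.Adj x y → s(x, y) ≠ s(u, v) → y ∈ C := by
      intro x y hx hxy hne
      refine hx.trans (SimpleGraph.Adj.reachable ?_)
      rw [hG', SimpleGraph.sdiff_adj]
      refine ⟨hxy, ?_⟩
      rw [SimpleGraph.fromEdgeSet_adj]
      rintro ⟨hmem, -⟩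
      exact hne (by simpa using hmem)
    have hab : π u ≠ π v := by
      have := (hcov u).mapsTo (by simpa using hadj : v ∈ H.neighborSet u)
      simpa [SimpleGraph.completeGraph, eq_comm] using this
    have hnbv : nbr u (π v) = v := (huniq u (π v) hab.symm v hadj rfl).symm
    -- propagation of membership in C
    have hmemC : ∀ x (j : Fin 4), x ∈ C → j ≠ π x → ¬(x = u ∧ j = π v) → nbr x j ∈ C := by
      intro x j hx hj hne
      refine hstep x (nbr x j) hx (hnadj x j hj) ?_
      intro hs
      rw [Sym2.eq_iff] at hs
      rcases hs with ⟨rfl, hnv⟩ | ⟨rfl, hnu⟩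
      · exact hne ⟨rfl, by rw [← hnv, hnπ x j hj]⟩
      · exact hvC hx
    -- a third colour
    obtain ⟨c, hca, hcb⟩ : ∃ c : Fin 4, c ≠ π u ∧ c ≠ π v := by
      by_contra hcon
      push_neg at hcon
      have h4 : (Finset.univ : Finset (Fin 4)).card ≤ ({π u, π v} : Finset (Fin 4)).card := by
        apply Finset.card_le_card
        intro x _
        rcases eq_or_ne x (π u) with h | h
        · simp [h]
        · simp [hcon x h]
      have h2 : ({π u, π v} : Finset (Fin 4)).card ≤ 2 :=
        (Finset.card_insert_le _ _).trans (by simp)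
      simp only [Finset.card_univ, Fintype.card_fin] at h4
      omega
    -- the fibers inside C
    set Ca : Set V := {x | x ∈ C ∧ π x = π u} with hCa
    set Cb : Set V := {x | x ∈ C ∧ π x = π v} with hCb
    set Cc : Set V := {x | x ∈ C ∧ π x = c} with hCc
    have h1 : Ca.ncard ≤ Cc.ncard := by
      refine Set.ncard_le_ncard_of_injOn (fun x => nbr x c) ?_ ?_ (Set.toFinite _)
      · rintro x ⟨hx, hπx⟩
        exact ⟨hmemC x c hx (hπx ▸ hca) (fun h => hcb h.2), hnπ x c (hπx ▸ hca)⟩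
      · rintro x ⟨hx, hπx⟩ y ⟨hy, hπy⟩ heq
        exact hinj x y c (hπx ▸ hca) (hπx.trans hπy.symm) heq
    have h2 : Cc.ncard ≤ Cb.ncard := by
      refine Set.ncard_le_ncard_of_injOn (fun x => nbr x (π v)) ?_ ?_ (Set.toFinite _)
      · rintro x ⟨hx, hπx⟩
        have hj : π v ≠ π x := by rw [hπx]; exact fun h => hcb h.symm
        refine ⟨hmemC x (π v) hx hj ?_, hnπ x (π v) hj⟩
        rintro ⟨rfl, -⟩
        exact hca hπx.symm
      · rintro x ⟨hx, hπx⟩ y ⟨hy, hπy⟩ heq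
        have hj : π v ≠ π x := by rw [hπx]; exact fun h => hcb h.symm
        exact hinj x y (π v) hj (hπx.trans hπy.symm) heq
    have h3 : Cb.ncard ≤ (Ca \ {u}).ncard := by
      refine Set.ncard_le_ncard_of_injOn (fun x => nbr x (π u)) ?_ ?_ (Set.toFinite _)
      · rintro x ⟨hx, hπx⟩
        have hj : π u ≠ π x := by rw [hπx]; exact hab
        have hxu : x ≠ u := fun h => hab (by rw [← h, hπx])
        refine ⟨⟨hmemC x (π u) hx hj (fun h => hxu h.1), hnπ x (π u) hj⟩, ?_⟩
        simp only [Set.mem_singleton_iff]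
        intro hnu
        have : x = nbr u (π v) := by
          refine huniq u (π v) hab.symm x ?_ hπx
          rw [← hnu]; exact (hnadj x (π u) hj).symm
        rw [this, hnbv] at hx
        exact hvC hx
      · rintro x ⟨hx, hπx⟩ y ⟨hy, hπy⟩ heq
        have hj : π u ≠ π x := by rw [hπx]; exact hab
        exact hinj x y (π u) hj (hπx.trans hπy.symm) heq
    have h4 : (Ca \ {u}).ncard < Ca.ncard :=
      Set.ncard_diff_singleton_lt_of_mem ⟨huC, rfl⟩ (Set.toFinite _)
    omega
end

section
/- Let H be a finite connected graph admitting a cover projection onto the complete graph K4 on four vertices. Then H is 2-connected: H has at least 4 vertices, and for every vertex v of H, the subgraph of H induced on all vertices other than v is connected. -/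
/-- Let `H` be a finite connected graph admitting a cover projection
onto the complete graph `K₄` on four vertices (an onto map `π` sending the
neighbourhood of each vertex `v` bijectively onto the neighbourhood of `π v`).
Then `H` is `2`-connected: it has at least `4` vertices, and for every vertex `v`,
the subgraph induced on all vertices other than `v` is connected. -/
theorem cover_of_K4_two_connected {V : Type*} [Fintype V]
    (H : SimpleGraph V) (hconn : H.Connected) (π : V → Fin 4)
    (hsurj : Function.Surjective π)
    (hcov : ∀ v : V, Set.BijOn π (H.neighborSet v)
      ((SimpleGraph.completeGraph (Fin 4)).neighborSet (π v))) :
    4 ≤ Fintype.card V ∧ ∀ v : V, (H.induce {w : V | w ≠ v}).Connected := by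
  have hcard : 4 ≤ Fintype.card V := by
    simpa using Fintype.card_le_of_surjective π hsurj
  refine ⟨hcard, fun v => ?_⟩
  -- color facts
  have hmaps : ∀ (u w : V), H.Adj u w → π u ≠ π w := by
    intro u w h
    have := (hcov u).mapsTo (show w ∈ H.neighborSet u from h)
    exact Ne.symm (by simpa [SimpleGraph.completeGraph] using this)
  have huniq : ∀ (u w w' : V), H.Adj u w → H.Adj u w' → π w = π w' → w = w' := by
    intro u w w' h h' he
    exact (hcov u).injOn (show w ∈ H.neighborSet u from h)
      (show w' ∈ H.neighborSet u from h') he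
  have hex : ∀ (u : V) (c : Fin 4), c ≠ π u → ∃ w, H.Adj u w ∧ π w = c := by
    intro u c hc
    have hc' : c ∈ (SimpleGraph.completeGraph (Fin 4)).neighborSet (π u) := by
      simpa [SimpleGraph.completeGraph] using hc
    obtain ⟨w, hw, hwc⟩ := (hcov u).surjOn hc'
    exact ⟨w, hw, hwc⟩
  choose f hfadj hfπ using hex
  set H' := H.induce {w : V | w ≠ v} with hH'def
  have hadj' : ∀ (x y : V) (hx : x ≠ v) (hy : y ≠ v), H.Adj x y →
      H'.Adj ⟨x, hx⟩ ⟨y, hy⟩ := by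
    intro x y hx hy h
    simpa [hH'def] using h
  -- key: any two neighbours of v are connected in H'
  have key : ∀ (n1 n2 : V), H.Adj v n1 → H.Adj v n2 → ∀ (h1 : n1 ≠ v) (h2 : n2 ≠ v),
      H'.Reachable ⟨n1, h1⟩ ⟨n2, h2⟩ := by
    intro n1 n2 hadj1 hadj2 h1 h2
    by_cases heq : π n1 = π n2
    · have : n1 = n2 := huniq v n1 n2 hadj1 hadj2 heq
      subst this
      exact SimpleGraph.Reachable.refl _
    by_contra hreach
    set c1 := π n1 with hc1def
    set c2 := π n2 with hc2def
    have hc1 : c1 ≠ π v := (hmaps v n1 hadj1).symm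
    have hc2 : c2 ≠ π v := (hmaps v n2 hadj2).symm
    -- the set of vertices reachable from n1 in H'
    set S : Set V := {x | ∃ hx : x ≠ v, H'.Reachable ⟨n1, h1⟩ ⟨x, hx⟩} with hSdef
    have hn1S : n1 ∈ S := ⟨h1, SimpleGraph.Reachable.refl _⟩
    have hn2S : n2 ∉ S := by
      rintro ⟨hx, hr⟩
      exact hreach hr
    have hclos : ∀ x ∈ S, ∀ y, H.Adj x y → y ≠ v → y ∈ S := by
      rintro x ⟨hx, hr⟩ y h hy
      exact ⟨hy, hr.trans (hadj' x y hx hy h).reachable⟩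
    -- the rotation map
    set ρ : V → V := fun u =>
      if h : π u = π v then
        f (f (f u c1 (by rw [h]; exact hc1)) c2
            (by rw [hfπ]; exact Ne.symm heq)) (π v)
          (by rw [hfπ]; exact Ne.symm hc2)
      else u with hρdef
    have hρspec : ∀ u : V, π u = π v → ∃ u1 u2, H.Adj u u1 ∧ π u1 = c1 ∧
        H.Adj u1 u2 ∧ π u2 = c2 ∧ H.Adj u2 (ρ u) ∧ π (ρ u) = π v := by
      intro u hu
      have e1 : c1 ≠ π u := by rw [hu]; exact hc1
      have e2 : c2 ≠ π (f u c1 e1) := by rw [hfπ]; exact Ne.symm heq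
      have e3 : π v ≠ π (f (f u c1 e1) c2 e2) := by rw [hfπ]; exact Ne.symm hc2
      have hρu : ρ u = f (f (f u c1 e1) c2 e2) (π v) e3 := by
        simp only [hρdef]
        rw [dif_pos hu]
      exact ⟨f u c1 e1, f (f u c1 e1) c2 e2, hfadj _ _ _, hfπ _ _ _, hfadj _ _ _,
        hfπ _ _ _, by rw [hρu]; exact hfadj _ _ _, by rw [hρu]; exact hfπ _ _ _⟩
    set T : Set V := {u | π u = π v ∧ (u = v ∨ u ∈ S)} with hTdef
    have hvT : v ∈ T := ⟨rfl, Or.inl rfl⟩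
    have hmapsT : ∀ u ∈ T, ρ u ∈ T ∧ ρ u ≠ v := by
      rintro u ⟨hu, hu'⟩
      obtain ⟨u1, u2, ha1, hp1, ha2, hp2, ha3, hp3⟩ := hρspec u hu
      have hu1v : u1 ≠ v := fun h => hc1 (by rw [← hp1, h])
      have hu2v : u2 ≠ v := fun h => hc2 (by rw [← hp2, h])
      have hu1S : u1 ∈ S := by
        rcases hu' with h | h
        · have : u1 = n1 := huniq v u1 n1 (h ▸ ha1) hadj1 hp1
          rwa [this]
        · exact hclos u h u1 ha1 hu1v
      have hu2S : u2 ∈ S := hclos u1 hu1S u2 ha2 hu2v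
      have hρv : ρ u ≠ v := by
        intro h
        have : u2 = n2 := huniq v u2 n2 (h ▸ ha3.symm) hadj2 hp2
        exact hn2S (this ▸ hu2S)
      exact ⟨⟨hp3, Or.inr (hclos u2 hu2S (ρ u) ha3 hρv)⟩, hρv⟩
    have hinj : Set.InjOn ρ T := by
      rintro u ⟨hu, _⟩ u' ⟨hu', _⟩ he
      obtain ⟨u1, u2, ha1, hp1, ha2, hp2, ha3, hp3⟩ := hρspec u hu
      obtain ⟨u1', u2', ha1', hp1', ha2', hp2', ha3', hp3'⟩ := hρspec u' hu'
      have h2 : u2 = u2' := huniq (ρ u) u2 u2' ha3.symm (he ▸ ha3'.symm)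
        (hp2.trans hp2'.symm)
      subst h2
      have h1 : u1 = u1' := huniq u2 u1 u1' ha2.symm ha2'.symm (hp1.trans hp1'.symm)
      subst h1
      exact huniq u1 u u' ha1.symm ha1'.symm (hu.trans hu'.symm)
    -- finiteness contradiction
    have hTfin : T.Finite := Set.toFinite T
    have himg : ρ '' T ⊆ T \ {v} := by
      rintro x ⟨u, hu, rfl⟩
      exact ⟨(hmapsT u hu).1, (hmapsT u hu).2⟩
    have h1' : (ρ '' T).ncard = T.ncard := Set.ncard_image_of_injOn hinj
    have h2' : (ρ '' T).ncard ≤ (T \ {v}).ncard :=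
      Set.ncard_le_ncard himg hTfin.diff
    have h3' : (T \ {v}).ncard < T.ncard :=
      Set.ncard_diff_singleton_lt_of_mem hvT hTfin
    omega
  -- every vertex reaches a neighbour of v
  have hstep1 : ∀ (N : ℕ) (x : V) (p : H.Walk x v), p.length ≤ N → ∀ (hx : x ≠ v),
      ∃ (n : V) (hn : n ≠ v), H.Adj v n ∧ H'.Reachable ⟨x, hx⟩ ⟨n, hn⟩ := by
    intro N
    induction N with
    | zero =>
      intro x p hp hx
      cases p with
      | nil => exact absurd rfl hx
      | cons h q => simp at hp
    | succ N ih =>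
      intro x p hp hx
      cases p with
      | nil => exact absurd rfl hx
      | @cons _ y _ h q =>
        by_cases hy : y = v
        · subst hy
          exact ⟨x, hx, h.symm, SimpleGraph.Reachable.refl _⟩
        · have hq : q.length ≤ N := by
            simp only [SimpleGraph.Walk.length_cons] at hp
            omega
          obtain ⟨n, hn, hadjn, hr⟩ := ih y q hq hy
          exact ⟨n, hn, hadjn, (hadj' x y hx hy h).reachable.trans hr⟩
  rw [SimpleGraph.connected_iff]
  constructor
  · rintro ⟨x, hx⟩ ⟨y, hy⟩
    obtain ⟨nx, hnx, hax, hrx⟩ := hstep1 _ x (hconn.preconnected x v).some le_rfl hx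
    obtain ⟨ny, hny, hay, hry⟩ := hstep1 _ y (hconn.preconnected y v).some le_rfl hy
    exact hrx.trans ((key nx ny hax hay hnx hny).trans hry.symm)
  · obtain ⟨w, hw⟩ := Fintype.exists_ne_of_one_lt_card (by omega) v
    exact ⟨⟨w, hw⟩⟩
end
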